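/- Under the decomposition C(r) = C(r*) + C₁(v) + C₂(v) - K(v) + 2C₁(r*,v) + 2C₂(r*,v) with v = r - r*, if r* satisfies the first-order condition with multiplier λ and ∫_0^T v_t dt = 0, then ℓ(r*,v) := 2C₁(r*,v) + 2C₂(r*,v) - K(v) = 0, hence C(r) = C(r*) + C₁(v) + C₂(v) ≥ C(r*), with equality iff v = 0 a.e. -/

import Mathlib

/-!
Expanding the quadratic cost around `r*` gives
`C(r* + v) = C(r*) + κ ∫ v² + φ ∫ V² + ℓ(r*, v)` with `V t = ∫₀ᵗ v`. Multiplying the first-order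
condition by `v` and integrating (the multiplier drops out since `∫ v = 0`) turns
`2 C₁(r*, v) - K(v)` into `-2φ ∫ G v`, where `G` is the primitive of the inventory `x - ∫₀ᵗ r*`.
Integrating by parts against `V`, which vanishes at `T`, shows that `2 C₂(r*, v) = 2φ ∫ G v`,
so `ℓ(r*, v) = 0`. Since `V` is only absolutely continuous, integration by parts is taken in
that generality.
-/

open MeasureTheory

/-- The cost functional of the static optimal execution problem. -/
noncomputable def execCost (κ φ T x : ℝ) (m r : ℝ → ℝ) : ℝ :=
  κ * (∫ t in (0:ℝ)..T, (r t) ^ 2)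
    + φ * (∫ t in (0:ℝ)..T, (x - ∫ s in (0:ℝ)..t, r s) ^ 2)
    - ∫ t in (0:ℝ)..T, (∫ s in (0:ℝ)..t, m s) * r t

open Set intervalIntegral

lemma IntervalIntegrable.ae_deriv_primitive_eq {f : ℝ → ℝ} {a b : ℝ}
    (hf : IntervalIntegrable f volume a b) :
    ∀ᵐ x, x ∈ uIoc a b → deriv (fun x => ∫ t in a..x, f t) x = f x := by
  filter_upwards [hf.ae_hasDerivAt_integral] with x hx hxab
  exact (hx (uIoc_subset_uIcc hxab) a left_mem_uIcc).deriv

theorem intervalIntegral.integral_primitive_mul {f g : ℝ → ℝ} {a b : ℝ}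
    (hf : IntervalIntegrable f volume a b) (hg : IntervalIntegrable g volume a b) :
    ∫ x in a..b, (∫ t in a..x, f t) * g x
      = (∫ x in a..b, f x) * (∫ x in a..b, g x) - ∫ x in a..b, f x * ∫ t in a..x, g t := by
  have hF := hf.absolutelyContinuousOnInterval_intervalIntegral left_mem_uIcc
  have hG := hg.absolutelyContinuousOnInterval_intervalIntegral left_mem_uIcc
  have hFg : ∫ x in a..b, (∫ t in a..x, f t) * g x
      = ∫ x in a..b, (∫ t in a..x, f t) * deriv (fun x => ∫ t in a..x, g t) x :=
    integral_congr_ae <| by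
      filter_upwards [hg.ae_deriv_primitive_eq] with x hx hxab using by rw [hx hxab]
  have hfG : ∫ x in a..b, f x * ∫ t in a..x, g t
      = ∫ x in a..b, deriv (fun x => ∫ t in a..x, f t) x * ∫ t in a..x, g t :=
    integral_congr_ae <| by
      filter_upwards [hf.ae_deriv_primitive_eq] with x hx hxab using by rw [hx hxab]
  rw [hFg, hfG, hF.integral_mul_deriv_eq_deriv_mul hG, integral_same, zero_mul, sub_zero]

lemma IntervalIntegrable.mul_of_sq {f g : ℝ → ℝ} {a b : ℝ} {μ : Measure ℝ}
    (hf : IntervalIntegrable f μ a b) (hg : IntervalIntegrable g μ a b)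
    (hf2 : IntervalIntegrable (fun t => f t ^ 2) μ a b)
    (hg2 : IntervalIntegrable (fun t => g t ^ 2) μ a b) :
    IntervalIntegrable (fun t => f t * g t) μ a b := by
  rw [intervalIntegrable_iff] at *
  exact ((memLp_two_iff_integrable_sq hf.aestronglyMeasurable).2 hf2).integrable_mul
    ((memLp_two_iff_integrable_sq hg.aestronglyMeasurable).2 hg2)

lemma IntervalIntegrable.continuousOn_primitive {f : ℝ → ℝ} {a b : ℝ}
    (hf : IntervalIntegrable f volume a b) :
    ContinuousOn (fun t => ∫ s in a..t, f s) (uIcc a b) :=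
  continuousOn_primitive_interval' hf left_mem_uIcc

lemma intervalIntegral.integral_sq_eq_zero_iff {f : ℝ → ℝ} {a b : ℝ} (hab : a ≤ b)
    (hf2 : IntervalIntegrable (fun t => f t ^ 2) volume a b) :
    ∫ t in a..b, f t ^ 2 = 0 ↔ ∀ᵐ t ∂(volume.restrict (Ioc a b)), f t = 0 := by
  rw [integral_eq_zero_iff_of_le_of_nonneg_ae hab (.of_forall fun t => sq_nonneg (f t)) hf2]
  simp only [Filter.EventuallyEq, Pi.zero_apply, pow_eq_zero_iff two_ne_zero]

lemma intervalIntegral.integral_eq_zero_of_ae_restrict_eq_zero {f : ℝ → ℝ} {a b t : ℝ}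
    (hf : ∀ᵐ s ∂(volume.restrict (Ioc a b)), f s = 0) (ht : t ∈ Icc a b) :
    ∫ s in a..t, f s = 0 := by
  rw [integral_of_le ht.1]
  exact integral_eq_zero_of_ae
    (ae_restrict_of_ae_restrict_of_subset (Ioc_subset_Ioc_right ht.2) hf)

/-- The cross term `ℓ(r, v) = 2 C₁(r, v) + 2 C₂(r, v) - K(v)`; the inventory induced by `v`,
started at `0`, is `-∫₀ᵗ v`. -/
noncomputable def execCrossTerm (κ φ T x : ℝ) (m r v : ℝ → ℝ) : ℝ :=
  2 * (κ * ∫ t in (0:ℝ)..T, r t * v t)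
    + 2 * (φ * ∫ t in (0:ℝ)..T,
        (x - ∫ s in (0:ℝ)..t, r s) * (-(∫ s in (0:ℝ)..t, v s)))
    - ∫ t in (0:ℝ)..T, (∫ s in (0:ℝ)..t, m s) * v t

section

variable {κ φ T x : ℝ} {m r v : ℝ → ℝ}

theorem execCost_add (hm : IntervalIntegrable m volume 0 T)
    (hr : IntervalIntegrable r volume 0 T) (hr2 : IntervalIntegrable (fun t => r t ^ 2) volume 0 T)
    (hv : IntervalIntegrable v volume 0 T)
    (hv2 : IntervalIntegrable (fun t => v t ^ 2) volume 0 T) :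
    execCost κ φ T x m (fun t => r t + v t)
      = execCost κ φ T x m r + κ * (∫ t in (0:ℝ)..T, v t ^ 2)
        + φ * (∫ t in (0:ℝ)..T, (∫ s in (0:ℝ)..t, v s) ^ 2) + execCrossTerm κ φ T x m r v := by
  set R := fun t => ∫ s in (0:ℝ)..t, r s
  set V := fun t => ∫ s in (0:ℝ)..t, v s
  set M := fun t => ∫ s in (0:ℝ)..t, m s
  have hRc : ContinuousOn (fun t => x - R t) (uIcc 0 T) :=
    continuousOn_const.sub hr.continuousOn_primitive
  have hVc : ContinuousOn V (uIcc 0 T) := hv.continuousOn_primitive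
  have hMc : ContinuousOn M (uIcc 0 T) := hm.continuousOn_primitive
  have hkin : ∫ t in (0:ℝ)..T, (r t + v t) ^ 2
      = (∫ t in (0:ℝ)..T, r t ^ 2) + 2 * (∫ t in (0:ℝ)..T, r t * v t)
        + ∫ t in (0:ℝ)..T, v t ^ 2 := by
    have hrv := hr.mul_of_sq hv hr2 hv2
    simp only [add_sq, mul_assoc]
    rw [integral_add (hr2.add (hrv.const_mul 2)) hv2, integral_add hr2 (hrv.const_mul 2),
      intervalIntegral.integral_const_mul]
  have hinv : ∫ t in (0:ℝ)..T, (x - ∫ s in (0:ℝ)..t, (r s + v s)) ^ 2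
      = (∫ t in (0:ℝ)..T, (x - R t) ^ 2) + 2 * (∫ t in (0:ℝ)..T, (x - R t) * -V t)
        + ∫ t in (0:ℝ)..T, V t ^ 2 := by
    have hsplit : ∀ t ∈ uIcc (0:ℝ) T,
        (x - ∫ s in (0:ℝ)..t, (r s + v s)) ^ 2
          = (x - R t) ^ 2 + 2 * ((x - R t) * -V t) + V t ^ 2 := by
      intro t ht
      have hsub := uIcc_subset_uIcc left_mem_uIcc ht
      rw [integral_add (hr.mono_set hsub) (hv.mono_set hsub)]
      ring
    have hR2 : IntervalIntegrable (fun t => (x - R t) ^ 2) volume 0 T :=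
      (hRc.pow 2).intervalIntegrable
    have hRV : IntervalIntegrable (fun t => 2 * ((x - R t) * -V t)) volume 0 T :=
      (hRc.mul hVc.neg).intervalIntegrable.const_mul 2
    have hV2 : IntervalIntegrable (fun t => V t ^ 2) volume 0 T := (hVc.pow 2).intervalIntegrable
    rw [integral_congr hsplit, integral_add (hR2.add hRV) hV2, integral_add hR2 hRV,
      intervalIntegral.integral_const_mul]
  have hrev : ∫ t in (0:ℝ)..T, M t * (r t + v t)
      = (∫ t in (0:ℝ)..T, M t * r t) + ∫ t in (0:ℝ)..T, M t * v t := by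
    simp only [mul_add]
    exact integral_add (hr.continuousOn_mul hMc) (hv.continuousOn_mul hMc)
  simp only [execCost, execCrossTerm]
  rw [hkin, hinv, hrev]
  ring

theorem execCrossTerm_eq_zero_of_foc (hT : 0 ≤ T) (hm : IntervalIntegrable m volume 0 T)
    (hr : IntervalIntegrable r volume 0 T) (hv : IntervalIntegrable v volume 0 T)
    (hvzero : ∫ t in (0:ℝ)..T, v t = 0) {lam : ℝ}
    (hFOC : ∀ t ∈ Icc (0:ℝ) T,
      2 * κ * r t + 2 * φ * (∫ s in (0:ℝ)..t, (x - ∫ u in (0:ℝ)..s, r u))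
        - (∫ s in (0:ℝ)..t, m s) = lam) :
    execCrossTerm κ φ T x m r v = 0 := by
  set V := fun t => ∫ s in (0:ℝ)..t, v s
  set M := fun t => ∫ s in (0:ℝ)..t, m s
  set G := fun t => ∫ s in (0:ℝ)..t, (x - ∫ u in (0:ℝ)..s, r u)
  have hg : IntervalIntegrable (fun t => x - ∫ s in (0:ℝ)..t, r s) volume 0 T :=
    (continuousOn_const.sub hr.continuousOn_primitive).intervalIntegrable
  have hMv := hv.continuousOn_mul hm.continuousOn_primitive
  have hGv := hv.continuousOn_mul hg.continuousOn_primitive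
  have hfoc : 2 * (κ * ∫ t in (0:ℝ)..T, r t * v t)
      = ∫ t in (0:ℝ)..T, (lam * v t + (M t * v t - 2 * φ * (G t * v t))) := by
    rw [← mul_assoc, ← intervalIntegral.integral_const_mul]
    refine integral_congr fun t ht => ?_
    rw [uIcc_of_le hT] at ht
    rw [← hFOC t ht]
    ring
  have hparts : ∫ t in (0:ℝ)..T, (x - ∫ s in (0:ℝ)..t, r s) * -V t
      = ∫ t in (0:ℝ)..T, G t * v t := by
    rw [integral_primitive_mul hg hv, hvzero, mul_zero, zero_sub,
      ← intervalIntegral.integral_neg]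
    simp only [mul_neg, V]
  rw [execCrossTerm, hfoc, hparts,
    integral_add (hv.const_mul lam) (hMv.sub (hGv.const_mul _)),
    integral_sub hMv (hGv.const_mul _),
    intervalIntegral.integral_const_mul, intervalIntegral.integral_const_mul, hvzero]
  ring

theorem weighted_integral_sq_add_primitive_sq_eq_zero_iff (hκ : 0 < κ) (hφ : 0 ≤ φ) (hT : 0 ≤ T)
    (hv2 : IntervalIntegrable (fun t => v t ^ 2) volume 0 T) :
    κ * (∫ t in (0:ℝ)..T, v t ^ 2) + φ * (∫ t in (0:ℝ)..T, (∫ s in (0:ℝ)..t, v s) ^ 2) = 0 ↔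
      ∀ᵐ t ∂(volume.restrict (Ioc (0:ℝ) T)), v t = 0 := by
  constructor
  · intro h
    have hI := intervalIntegral.integral_nonneg (μ := volume) hT fun t _ => sq_nonneg (v t)
    have hJ := intervalIntegral.integral_nonneg (μ := volume) hT fun t _ =>
      sq_nonneg (∫ s in (0:ℝ)..t, v s)
    exact (integral_sq_eq_zero_iff hT hv2).1 (by nlinarith [mul_nonneg hκ.le hI, mul_nonneg hφ hJ])
  · intro h
    have hV : ∀ t ∈ uIcc (0:ℝ) T, (∫ s in (0:ℝ)..t, v s) ^ 2 = 0 := fun t ht => by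
      rw [uIcc_of_le hT] at ht
      rw [integral_eq_zero_of_ae_restrict_eq_zero h ht, zero_pow two_ne_zero]
    rw [(integral_sq_eq_zero_iff hT hv2).2 h, integral_congr hV, intervalIntegral.integral_zero]
    ring

end

theorem stmt17_general (κ φ T x : ℝ) (hκ : 0 < κ) (hφ : 0 < φ) (hT : 0 < T)
    (m : ℝ → ℝ) (hm : IntervalIntegrable m volume 0 T)
    (rstar v : ℝ → ℝ)
    (hrstar : IntervalIntegrable rstar volume 0 T)
    (hrstar2 : IntervalIntegrable (fun t => (rstar t) ^ 2) volume 0 T)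
    (hv : IntervalIntegrable v volume 0 T)
    (hv2 : IntervalIntegrable (fun t => (v t) ^ 2) volume 0 T)
    (hvzero : (∫ t in (0:ℝ)..T, v t) = 0)
    (lam : ℝ)
    (hFOC : ∀ t ∈ Set.Icc (0:ℝ) T,
      2 * κ * rstar t
        + 2 * φ * (∫ s in (0:ℝ)..t, (x - ∫ u in (0:ℝ)..s, rstar u))
        - (∫ s in (0:ℝ)..t, m s) = lam) :
    (2 * (κ * ∫ t in (0:ℝ)..T, rstar t * v t)
        + 2 * (φ * ∫ t in (0:ℝ)..T,
            (x - ∫ s in (0:ℝ)..t, rstar s) * (-(∫ s in (0:ℝ)..t, v s)))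
        - (∫ t in (0:ℝ)..T, (∫ s in (0:ℝ)..t, m s) * v t) = 0) ∧
    execCost κ φ T x m (fun t => rstar t + v t)
      = execCost κ φ T x m rstar
        + κ * (∫ t in (0:ℝ)..T, (v t) ^ 2)
        + φ * (∫ t in (0:ℝ)..T, (∫ s in (0:ℝ)..t, v s) ^ 2) ∧
    execCost κ φ T x m rstar ≤ execCost κ φ T x m (fun t => rstar t + v t) ∧
    (execCost κ φ T x m (fun t => rstar t + v t) = execCost κ φ T x m rstar ↔
      ∀ᵐ t ∂(volume.restrict (Set.Ioc (0:ℝ) T)), v t = 0) := by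
  have hcross : execCrossTerm κ φ T x m rstar v = 0 :=
    execCrossTerm_eq_zero_of_foc hT.le hm hrstar hv hvzero hFOC
  have hexpand : execCost κ φ T x m (fun t => rstar t + v t)
      = execCost κ φ T x m rstar + κ * (∫ t in (0:ℝ)..T, v t ^ 2)
        + φ * (∫ t in (0:ℝ)..T, (∫ s in (0:ℝ)..t, v s) ^ 2) := by
    rw [execCost_add hm hrstar hrstar2 hv hv2, hcross, add_zero]
  have hquad : 0 ≤ κ * (∫ t in (0:ℝ)..T, v t ^ 2)
      + φ * (∫ t in (0:ℝ)..T, (∫ s in (0:ℝ)..t, v s) ^ 2) := by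
    have hI := intervalIntegral.integral_nonneg (μ := volume) hT.le fun t _ => sq_nonneg (v t)
    have hJ := intervalIntegral.integral_nonneg (μ := volume) hT.le fun t _ =>
      sq_nonneg (∫ s in (0:ℝ)..t, v s)
    positivity
  refine ⟨hcross, hexpand, ?_, ?_⟩
  · rw [hexpand, add_assoc]
    exact le_add_of_nonneg_right hquad
  · rw [hexpand, add_assoc, add_eq_left,
      weighted_integral_sq_add_primitive_sq_eq_zero_iff hκ hφ.le hT.le hv2]

theorem stmt17 (κ φ T x : ℝ) (hκ : 0 < κ) (hφ : 0 < φ) (hT : 0 < T) (hx : 0 < x)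
    (m : ℝ → ℝ) (hm : IntervalIntegrable m volume 0 T)
    (rstar v : ℝ → ℝ)
    (hrstar : IntervalIntegrable rstar volume 0 T)
    (hrstar2 : IntervalIntegrable (fun t => (rstar t) ^ 2) volume 0 T)
    (hv : IntervalIntegrable v volume 0 T)
    (hv2 : IntervalIntegrable (fun t => (v t) ^ 2) volume 0 T)
    (hvzero : (∫ t in (0:ℝ)..T, v t) = 0)
    (lam : ℝ)
    (hFOC : ∀ t ∈ Set.Icc (0:ℝ) T,
      2 * κ * rstar t
        + 2 * φ * (∫ s in (0:ℝ)..t, (x - ∫ u in (0:ℝ)..s, rstar u))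
        - (∫ s in (0:ℝ)..t, m s) = lam) :
    (2 * (κ * ∫ t in (0:ℝ)..T, rstar t * v t)
        + 2 * (φ * ∫ t in (0:ℝ)..T,
            (x - ∫ s in (0:ℝ)..t, rstar s) * (-(∫ s in (0:ℝ)..t, v s)))
        - (∫ t in (0:ℝ)..T, (∫ s in (0:ℝ)..t, m s) * v t) = 0) ∧
    execCost κ φ T x m (fun t => rstar t + v t)
      = execCost κ φ T x m rstar
        + κ * (∫ t in (0:ℝ)..T, (v t) ^ 2)
        + φ * (∫ t in (0:ℝ)..T, (∫ s in (0:ℝ)..t, v s) ^ 2) ∧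
    execCost κ φ T x m rstar ≤ execCost κ φ T x m (fun t => rstar t + v t) ∧
    (execCost κ φ T x m (fun t => rstar t + v t) = execCost κ φ T x m rstar ↔
      ∀ᵐ t ∂(volume.restrict (Set.Ioc (0:ℝ) T)), v t = 0) :=
  stmt17_general κ φ T x hκ hφ hT m hm rstar v hrstar hrstar2 hv hv2 hvzero lam hFOC
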